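/- arXiv:2405.09383 — 5 statements merged into one kernel-verified Lean document; each statement's English description precedes it below -/
import Mathlib

section
/- Let K be a positive integer, let 𝓗 be a non-empty collection of graphs, and let G be a graph that does not contain H as a K-fat minor for any H ∈ 𝓗. Then there exists a graph Ĝ such that G is K-quasi-isometric to Ĝ and Ĝ does not contain H as a 3-fat minor for any H ∈ 𝓗. (Indeed, one may take Ĝ = G^K, the K-th power graph of G.) -/
open SimpleGraph

/-- The distance between two vertex sets `X` and `Y` in a graph `G` is at least `K`
(measured with the extended graph distance, so unreachable pairs are at infinite distance). -/
def SimpleGraph.SetDistGE {V : Type*} (G : SimpleGraph V) (X Y : Set V) (K : ℕ) : Prop :=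
  ∀ x ∈ X, ∀ y ∈ Y, (K : ℕ∞) ≤ G.edist x y

/-- `B, P` form a `K`-fat minor model of `H` in `G`: branch sets `B v` and edge paths `P e`
induce connected subgraphs, incident pairs intersect, and all other pairs of sets in the model
are at distance at least `K`. -/
def SimpleGraph.IsFatMinorModel {V W : Type*} (G : SimpleGraph V) (H : SimpleGraph W) (K : ℕ)
    (B : W → Set V) (P : H.edgeSet → Set V) : Prop :=
  (∀ w, (G.induce (B w)).Connected) ∧
  (∀ e, (G.induce (P e)).Connected) ∧
  (∀ (w : W) (e : H.edgeSet), w ∈ (e : Sym2 W) → (B w ∩ P e).Nonempty) ∧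
  (∀ w w' : W, w ≠ w' → G.SetDistGE (B w) (B w') K) ∧
  (∀ e e' : H.edgeSet, e ≠ e' → G.SetDistGE (P e) (P e') K) ∧
  (∀ (w : W) (e : H.edgeSet), w ∉ (e : Sym2 W) → G.SetDistGE (B w) (P e) K)

/-- `G` contains `H` as a `K`-fat minor. -/
def SimpleGraph.HasFatMinor {V W : Type*} (G : SimpleGraph V) (H : SimpleGraph W) (K : ℕ) : Prop :=
  ∃ B P, G.IsFatMinorModel H K B P

/-- `φ` is a `q`-quasi-isometry from the graph `G` to the graph `G'`. -/
def SimpleGraph.IsQuasiIsometry {V V' : Type*} (q : ℕ) (G : SimpleGraph V) (G' : SimpleGraph V')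
    (φ : V → V') : Prop :=
  (∀ x y : V, (q : ℝ)⁻¹ * (G.dist x y : ℝ) - q ≤ (G'.dist (φ x) (φ y) : ℝ) ∧
     (G'.dist (φ x) (φ y) : ℝ) ≤ q * (G.dist x y : ℝ) + q) ∧
  ∀ v' : V', ∃ v : V, (G'.dist v' (φ v) : ℝ) ≤ q

universe u

/-!
Take `Ĝ = G^K`. The identity is a `K`-quasi-isometry, since one step of `G^K` is at most `K`
steps of `G` and every edge of `G` is an edge of `G^K`. Sets at distance at least `3` in `G^K`
are at distance at least `2K + 1` in `G`, so thickening every set of a `3`-fat model in `G^K`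
by `⌊K/2⌋` keeps the sets `K` apart, and makes them connected in `G`: a `G`-geodesic of length
`≤ K` joining two `G^K`-adjacent vertices stays within `⌊K/2⌋` of one of its ends. This turns
a `3`-fat minor of `G^K` into a `K`-fat minor of `G`.
-/

namespace SimpleGraph

variable {V W : Type*}

def power (G : SimpleGraph V) (K : ℕ) : SimpleGraph V where
  Adj u v := u ≠ v ∧ G.edist u v ≤ K
  symm := ⟨fun _ _ h => ⟨h.1.symm, by rw [edist_comm]; exact h.2⟩⟩
  loopless := ⟨fun _ h => h.1 rfl⟩

def cthickening (G : SimpleGraph V) (r : ℕ) (S : Set V) : Set V :=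
  {x | ∃ s ∈ S, G.edist x s ≤ r}

variable {G : SimpleGraph V} {K r : ℕ} {x y : V}

section Power

@[simp]
lemma power_adj : (G.power K).Adj x y ↔ x ≠ y ∧ G.edist x y ≤ K := Iff.rfl

lemma le_power (hK : 0 < K) : G ≤ G.power K := fun _ _ h =>
  ⟨h.ne, (edist_eq_one_iff_adj.2 h).le.trans (by exact_mod_cast hK)⟩

lemma edist_power_le_one (h : G.edist x y ≤ K) : (G.power K).edist x y ≤ 1 :=
  edist_le_one_iff_adj_or_eq.2 <| (eq_or_ne x y).symm.imp (fun hne => ⟨hne, h⟩) id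

lemma edist_power_le_two (h : G.edist x y ≤ 2 * K) : (G.power K).edist x y ≤ 2 := by
  obtain ⟨p, hp⟩ := exists_walk_of_edist_ne_top <|
    ne_top_of_le_ne_top (by exact_mod_cast ENat.natCast_ne_top (2 * K)) h
  have hlen : p.length ≤ 2 * K := by exact_mod_cast hp ▸ h
  calc (G.power K).edist x y
      ≤ (G.power K).edist x (p.getVert K) + (G.power K).edist (p.getVert K) y :=
        SimpleGraph.edist_triangle
    _ ≤ 1 + 1 := by
        gcongr
        · exact edist_power_le_one <| (p.take K).edist_le.trans (by simp)
        · exact edist_power_le_one <| (p.drop K).edist_le.trans <| by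
            rw [Walk.drop_length]; exact_mod_cast (by omega : p.length - K ≤ K)
    _ = 2 := one_add_one_eq_two

lemma edist_le_mul_length {x y : V} : ∀ p : (G.power K).Walk x y, G.edist x y ≤ K * p.length
  | .nil => by simp
  | .cons (v := z) h p => calc
      G.edist x y ≤ G.edist x z + G.edist z y := SimpleGraph.edist_triangle
      _ ≤ K + K * p.length := add_le_add h.2 (edist_le_mul_length p)
      _ = K * (p.cons h).length := by push_cast [Walk.length_cons]; ring

lemma Reachable.of_power (h : (G.power K).Reachable x y) : G.Reachable x y :=
  let ⟨p⟩ := h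
  reachable_of_edist_ne_top <|
    ne_top_of_le_ne_top (by exact_mod_cast ENat.natCast_ne_top (K * p.length))
      (edist_le_mul_length p)

lemma reachable_power_iff (hK : 0 < K) : (G.power K).Reachable x y ↔ G.Reachable x y :=
  ⟨.of_power, fun h => h.mono (le_power hK)⟩

lemma dist_power_le (hK : 0 < K) : (G.power K).dist x y ≤ G.dist x y := by
  by_cases h : G.Reachable x y
  · exact h.dist_anti (le_power hK)
  · simp [dist_eq_zero_of_not_reachable (mt Reachable.of_power h)]

lemma dist_le_mul_dist_power (hK : 0 < K) : G.dist x y ≤ K * (G.power K).dist x y := by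
  by_cases h : (G.power K).Reachable x y
  · obtain ⟨p, hp⟩ := h.exists_walk_length_eq_dist
    have := edist_le_mul_length p
    rw [← h.of_power.coe_dist_eq_edist, hp] at this
    exact_mod_cast this
  · simp [dist_eq_zero_of_not_reachable (mt (reachable_power_iff hK).2 h)]

lemma isQuasiIsometry_id_power (hK : 0 < K) : IsQuasiIsometry K G (G.power K) id := by
  refine ⟨fun x y => ?_, fun v => ⟨v, by simp⟩⟩
  have hK' : (1 : ℝ) ≤ K := by exact_mod_cast hK
  have hle : ((G.power K).dist x y : ℝ) ≤ G.dist x y := by exact_mod_cast dist_power_le hK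
  have hge : (G.dist x y : ℝ) ≤ K * (G.power K).dist x y := by
    exact_mod_cast dist_le_mul_dist_power hK
  constructor
  · have : (K : ℝ)⁻¹ * G.dist x y ≤ (G.power K).dist x y := by
      rwa [inv_mul_le_iff₀ (by positivity)]
    simp only [id]
    linarith
  · simp only [id]
    nlinarith [(G.dist x y).cast_nonneg (α := ℝ)]

end Power

section SetDist

variable {X Y : Set V}

lemma SetDistGE.mono {L : ℕ} (h : G.SetDistGE X Y K) (hLK : L ≤ K) : G.SetDistGE X Y L :=
  fun x hx y hy => le_trans (by exact_mod_cast hLK) (h x hx y hy)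

lemma SetDistGE.of_power (h : (G.power K).SetDistGE X Y 3) : G.SetDistGE X Y (2 * K + 1) := by
  intro x hx y hy
  by_contra! hlt
  have hle : G.edist x y ≤ 2 * K := by
    push_cast at hlt
    exact (ENat.lt_add_one_iff (by exact_mod_cast ENat.natCast_ne_top (2 * K))).1 hlt
  have := (h x hx y hy).trans (edist_power_le_two hle)
  norm_num at this

lemma SetDistGE.cthickening (h : G.SetDistGE X Y (K + 2 * r)) :
    G.SetDistGE (G.cthickening r X) (G.cthickening r Y) K := by
  rintro x' ⟨x, hx, hxx'⟩ y' ⟨y, hy, hyy'⟩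
  have : (K : ℕ∞) + 2 * r ≤ G.edist x' y' + 2 * r := calc
    (K : ℕ∞) + 2 * r ≤ G.edist x y := by exact_mod_cast h x hx y hy
    _ ≤ G.edist x x' + G.edist x' y' + G.edist y' y :=
        SimpleGraph.edist_triangle.trans <| by
          rw [add_assoc]; gcongr; exact SimpleGraph.edist_triangle
    _ ≤ r + G.edist x' y' + r := by rw [edist_comm]; gcongr
    _ = G.edist x' y' + 2 * r := by ring
  exact (ENat.add_le_add_iff_right (by exact_mod_cast ENat.natCast_ne_top (2 * r))).1 this

end SetDist

section Thickening

variable {S : Set V}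

lemma subset_cthickening : S ⊆ G.cthickening r S := fun s hs => ⟨s, hs, by simp⟩

lemma Walk.edist_le_of_mem_support {u v w : V} (p : G.Walk u v) (hw : w ∈ p.support) :
    G.edist w v ≤ p.length := by
  classical
  exact (p.dropUntil w hw).edist_le.trans (by exact_mod_cast p.length_dropUntil_le_length hw)

lemma Walk.edist_le_or_edist_le_of_mem_support {u v w : V} (p : G.Walk u v)
    (hw : w ∈ p.support) (hp : p.length ≤ 2 * r + 1) :
    G.edist u w ≤ r ∨ G.edist w v ≤ r := by
  classical
  have hsum : (p.takeUntil w hw).length + (p.dropUntil w hw).length = p.length := by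
    rw [← Walk.length_append, p.take_spec hw]
  refine (le_or_gt (p.takeUntil w hw).length r).imp (fun h => ?_) (fun h => ?_)
  · exact (p.takeUntil w hw).edist_le.trans (by exact_mod_cast h)
  · exact (p.dropUntil w hw).edist_le.trans (by exact_mod_cast (by omega : _ ≤ r))

lemma reachable_induce_cthickening_of_edist_le {s : V} (hs : s ∈ S) (hx : G.edist x s ≤ r) :
    (G.induce (G.cthickening r S)).Reachable ⟨x, s, hs, hx⟩ ⟨s, subset_cthickening hs⟩ := by
  obtain ⟨p, hp⟩ := exists_walk_of_edist_ne_top (ne_top_of_le_ne_top (ENat.natCast_ne_top r) hx)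
  exact ⟨p.induce (G.cthickening r S) fun v hv =>
    ⟨s, hs, (p.edist_le_of_mem_support hv).trans (hp.trans_le hx)⟩⟩

lemma reachable_induce_cthickening_of_edist_le_two_mul_add_one (hx : x ∈ S) (hy : y ∈ S)
    (h : G.edist x y ≤ 2 * r + 1) :
    (G.induce (G.cthickening r S)).Reachable ⟨x, subset_cthickening hx⟩
      ⟨y, subset_cthickening hy⟩ := by
  obtain ⟨p, hp⟩ := exists_walk_of_edist_ne_top <|
    ne_top_of_le_ne_top (by exact_mod_cast ENat.natCast_ne_top (2 * r + 1)) h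
  have hlen : p.length ≤ 2 * r + 1 := by exact_mod_cast hp ▸ h
  refine ⟨p.induce (G.cthickening r S) fun v hv => ?_⟩
  rcases p.edist_le_or_edist_le_of_mem_support hv hlen with hv | hv
  · exact ⟨x, hx, by rwa [edist_comm]⟩
  · exact ⟨y, hy, hv⟩

lemma connected_induce_cthickening_of_power (h : ((G.power K).induce S).Connected)
    (hr : K ≤ 2 * r + 1) : (G.induce (G.cthickening r S)).Connected := by
  have hS (s t : S) : (G.induce (G.cthickening r S)).Reachable ⟨s, subset_cthickening s.2⟩
      ⟨t, subset_cthickening t.2⟩ := by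
    obtain ⟨p⟩ := h.preconnected s t
    induction p with
    | nil => rfl
    | @cons u v _ hadj _ ih =>
      refine .trans (reachable_induce_cthickening_of_edist_le_two_mul_add_one u.2 v.2 ?_) ih
      exact (power_adj.1 (induce_adj.1 hadj)).2.trans (by exact_mod_cast hr)
  obtain ⟨s⟩ := h.nonempty
  rw [connected_iff_exists_forall_reachable]
  refine ⟨⟨s, subset_cthickening s.2⟩, ?_⟩
  rintro ⟨x, t, ht, hx⟩
  exact (hS s ⟨t, ht⟩).trans (reachable_induce_cthickening_of_edist_le ht hx).symm

end Thickening

lemma IsFatMinorModel.cthickening_of_power {H : SimpleGraph W} {B : W → Set V}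
    {P : H.edgeSet → Set V} (h : (G.power K).IsFatMinorModel H 3 B P) :
    G.IsFatMinorModel H K (G.cthickening (K / 2) ∘ B) (G.cthickening (K / 2) ∘ P) := by
  obtain ⟨hB, hP, hmeet, hBB, hPP, hBP⟩ := h
  have hr : K ≤ 2 * (K / 2) + 1 := by omega
  have hfar {X Y : Set V} (hXY : (G.power K).SetDistGE X Y 3) :
      G.SetDistGE (G.cthickening (K / 2) X) (G.cthickening (K / 2) Y) K :=
    (hXY.of_power.mono (by omega)).cthickening
  exact ⟨fun w => connected_induce_cthickening_of_power (hB w) hr,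
    fun e => connected_induce_cthickening_of_power (hP e) hr,
    fun w e hwe => (hmeet w e hwe).mono (Set.inter_subset_inter subset_cthickening
      subset_cthickening),
    fun w w' hne => hfar (hBB w w' hne), fun e e' hne => hfar (hPP e e' hne),
    fun w e hwe => hfar (hBP w e hwe)⟩

lemma HasFatMinor.of_power {H : SimpleGraph W} (h : (G.power K).HasFatMinor H 3) :
    G.HasFatMinor H K :=
  let ⟨_, _, hBP⟩ := h
  ⟨_, _, hBP.cthickening_of_power⟩

end SimpleGraph

theorem quasi_isometric_to_graph_without_three_fat_minors_general
    {V : Type u} (K : ℕ) (hK : 0 < K) (G : SimpleGraph V)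
    {ι : Type*} {W : ι → Type*} (ℋ : ∀ i, SimpleGraph (W i))
    (hG : ∀ i, ¬ G.HasFatMinor (ℋ i) K) :
    ∃ (V' : Type u) (Ghat : SimpleGraph V') (φ : V → V'),
      SimpleGraph.IsQuasiIsometry K G Ghat φ ∧ ∀ i, ¬ Ghat.HasFatMinor (ℋ i) 3 :=
  ⟨V, G.power K, id, isQuasiIsometry_id_power hK, fun i h => hG i h.of_power⟩

/-- **Reducing coarseness.** If `K` is a positive integer, `ℋ` a non-empty collection of
graphs, and `G` a graph with no `K`-fat `H` minor for every `H ∈ ℋ`, then `G` is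
`K`-quasi-isometric to a graph `Ghat` with no `3`-fat `H` minor for every `H ∈ ℋ`. -/
theorem quasi_isometric_to_graph_without_three_fat_minors
    {V : Type u} (K : ℕ) (hK : 0 < K) (G : SimpleGraph V)
    {ι : Type*} [Nonempty ι] {W : ι → Type*} (ℋ : ∀ i, SimpleGraph (W i))
    (hG : ∀ i, ¬ G.HasFatMinor (ℋ i) K) :
    ∃ (V' : Type u) (Ghat : SimpleGraph V') (φ : V → V'),
      SimpleGraph.IsQuasiIsometry K G Ghat φ ∧ ∀ i, ¬ Ghat.HasFatMinor (ℋ i) 3 :=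
  quasi_isometric_to_graph_without_three_fat_minors_general K hK G ℋ hG
end

section
/- Let q be a positive integer, let G be a graph, and let (M, d) be a length space that is q-quasi-isometric to G via a q-quasi-isometry φ: V(G) → M. Then for every set X ⊆ V(G) such that the induced subgraph G[X] is connected, the set N^{q+1}[φ(X)] ⊆ M is path-connected. -/
open Set ENNReal

variable {M : Type*} [MetricSpace M]

/-- The arc length (total variation on `[0,1]`) of a parametrised path `f : ℝ → M`. -/
noncomputable def pathLength (f : ℝ → M) : ℝ≥0∞ :=
  eVariationOn f (Set.Icc 0 1)

/-- `f` is a (parametrised) path from the set `X` to the set `Y`. -/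
def IsPathFromTo (f : ℝ → M) (X Y : Set M) : Prop :=
  ContinuousOn f (Set.Icc 0 1) ∧ f 0 ∈ X ∧ f 1 ∈ Y

/-- A metric space is a length space if any two points at distance `d` are joined by paths
of arc length arbitrarily close to `d`. -/
def IsLengthSpace (M : Type*) [MetricSpace M] : Prop :=
  ∀ x y : M, ∀ ε : ℝ, 0 < ε → ∃ f : ℝ → M,
    ContinuousOn f (Set.Icc 0 1) ∧ f 0 = x ∧ f 1 = y ∧
    pathLength f ≤ ENNReal.ofReal (dist x y + ε)

/-- `N^r[X]`: the set of points joined to `X` by a path of arc length at most `r`. -/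
def pathNbhd (X : Set M) (r : ℝ) : Set M :=
  {a | ∃ f : ℝ → M, ContinuousOn f (Set.Icc 0 1) ∧ f 0 = a ∧ f 1 ∈ X ∧
    pathLength f ≤ ENNReal.ofReal r}

/-- The path-distance between the sets `X` and `Y` is at least `K`: every path from `X` to `Y`
has arc length at least `K`. -/
def PathDistGE (X Y : Set M) (K : ℝ) : Prop :=
  ∀ f : ℝ → M, IsPathFromTo f X Y → ENNReal.ofReal K ≤ pathLength f

/-- A set `S` is path-connected if any two of its points are joined by a path inside `S`. -/
def IsPathConnSet (S : Set M) : Prop :=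
  ∀ x ∈ S, ∀ y ∈ S, JoinedIn S x y

/-- `B, P` form a `K`-fat minor model of the graph `H` in the metric space `M`. -/
def IsSpaceFatMinorModel {W : Type*} (H : SimpleGraph W) (K : ℝ)
    (B : W → Set M) (P : H.edgeSet → Set M) : Prop :=
  (∀ w, (B w).Nonempty ∧ IsPathConnSet (B w)) ∧
  (∀ e, IsPathConnSet (P e)) ∧
  (∀ (w : W) (e : H.edgeSet), w ∈ (e : Sym2 W) → (B w ∩ P e).Nonempty) ∧
  (∀ w w' : W, w ≠ w' → PathDistGE (B w) (B w') K) ∧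
  (∀ e e' : H.edgeSet, e ≠ e' → PathDistGE (P e) (P e') K) ∧
  (∀ (w : W) (e : H.edgeSet), w ∉ (e : Sym2 W) → PathDistGE (B w) (P e) K)

/-- The metric space `M` contains `H` as a `K`-fat minor. -/
def SpaceHasFatMinor (M : Type*) [MetricSpace M] {W : Type*} (H : SimpleGraph W) (K : ℝ) : Prop :=
  ∃ (B : W → Set M) (P : H.edgeSet → Set M), IsSpaceFatMinorModel H K B P

/-- `φ` is a `q`-quasi-isometry from the graph `G` to the metric space `M`. -/
def IsGraphSpaceQuasiIsometry {V : Type*} (q : ℕ) (G : SimpleGraph V) (φ : V → M) : Prop :=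
  (∀ x y : V, (q : ℝ)⁻¹ * (G.dist x y : ℝ) - q ≤ dist (φ x) (φ y) ∧
     dist (φ x) (φ y) ≤ q * (G.dist x y : ℝ) + q) ∧
  ∀ z : M, ∃ v : V, dist z (φ v) ≤ q

/-! Images of adjacent vertices of `G[X]` are at distance at most `2q`, so in a length space they
are joined by a path of length less than `2(q + 1)`, and such a path stays in `N^{q+1}[φ(X)]`.
Connectivity of `G[X]` chains these paths together, and any point of `N^{q+1}[φ(X)]` is joined to
`φ(X)` inside the neighbourhood by the path witnessing its membership. -/

lemma pathLength_comp_lineMap (f : ℝ → M) (a b : ℝ) :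
    pathLength (f ∘ AffineMap.lineMap a b) = eVariationOn f (uIcc a b) := by
  rw [pathLength, ← segment_eq_uIcc, segment_eq_image_lineMap]
  rcases le_total a b with hab | hba
  · exact eVariationOn.comp_eq_of_monotoneOn f _ ((AffineMap.lineMap_mono hab).monotoneOn _)
  · exact eVariationOn.comp_eq_of_antitoneOn f _ ((AffineMap.lineMap_anti hba).antitoneOn _)

lemma subset_pathNbhd (Y : Set M) (r : ℝ) : Y ⊆ pathNbhd Y r := fun y hy ↦
  ⟨fun _ ↦ y, continuousOn_const, rfl, hy, by
    rw [pathLength, eVariationOn.constant_on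
      (subsingleton_singleton.anti (image_subset_iff.2 fun _ _ ↦ rfl))]
    exact zero_le⟩

lemma mem_pathNbhd_of_eVariationOn_le {Y : Set M} {r : ℝ} {f : ℝ → M}
    (hf : ContinuousOn f (Icc 0 1)) {a b : ℝ} (ha : a ∈ Icc (0 : ℝ) 1) (hb : b ∈ Icc (0 : ℝ) 1)
    (hfb : f b ∈ Y) (hvar : eVariationOn f (uIcc a b) ≤ ENNReal.ofReal r) :
    f a ∈ pathNbhd Y r :=
  ⟨f ∘ AffineMap.lineMap a b,
    hf.comp AffineMap.lineMap_continuous.continuousOn fun _ hs ↦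
      (convex_Icc 0 1).lineMap_mem ha hb hs,
    by simp, by simpa using hfb, by rwa [pathLength_comp_lineMap]⟩

lemma joinedIn_pathNbhd_of_mem {Y : Set M} {r : ℝ} {a : M} (ha : a ∈ pathNbhd Y r) :
    ∃ y ∈ Y, JoinedIn (pathNbhd Y r) a y := by
  obtain ⟨f, hf, rfl, hf1, hlen⟩ := ha
  refine ⟨f 1, hf1, JoinedIn.ofLine hf rfl rfl ?_⟩
  rintro _ ⟨t, ht, rfl⟩
  refine mem_pathNbhd_of_eVariationOn_le hf ht (right_mem_Icc.2 zero_le_one) hf1 ?_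
  rw [uIcc_of_le ht.2]
  exact (eVariationOn.mono f (Icc_subset_Icc ht.1 le_rfl)).trans hlen

/-- No point of the path is farther than `r` along it from both endpoints, as the two pieces of
the path add up to at most `2r`. -/
lemma joinedIn_pathNbhd_of_pathLength_le {Y : Set M} {r : ℝ} {f : ℝ → M}
    (hf : ContinuousOn f (Icc 0 1)) (hf0 : f 0 ∈ Y) (hf1 : f 1 ∈ Y)
    (hlen : pathLength f ≤ ENNReal.ofReal r + ENNReal.ofReal r) :
    JoinedIn (pathNbhd Y r) (f 0) (f 1) := by
  refine JoinedIn.ofLine hf rfl rfl ?_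
  rintro _ ⟨t, ht, rfl⟩
  by_cases hleft : eVariationOn f (Icc 0 t) ≤ ENNReal.ofReal r
  · refine mem_pathNbhd_of_eVariationOn_le hf ht (left_mem_Icc.2 zero_le_one) hf0 ?_
    rwa [uIcc_of_ge ht.1]
  · refine mem_pathNbhd_of_eVariationOn_le hf ht (right_mem_Icc.2 zero_le_one) hf1 ?_
    rw [uIcc_of_le ht.2]
    by_contra hright
    have hsplit : eVariationOn f (Icc 0 t) + eVariationOn f (Icc t 1) = pathLength f := by
      simpa [pathLength] using eVariationOn.Icc_add_Icc f (s := univ) ht.1 ht.2 (mem_univ t)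
    exact (ENNReal.add_lt_add (not_le.1 hleft) (not_le.1 hright)).not_ge (hsplit ▸ hlen)

lemma IsLengthSpace.joinedIn_pathNbhd (hM : IsLengthSpace M) {Y : Set M} {r : ℝ} {x y : M}
    (hx : x ∈ Y) (hy : y ∈ Y) (hxy : dist x y < 2 * r) : JoinedIn (pathNbhd Y r) x y := by
  obtain ⟨f, hf, rfl, rfl, hlen⟩ := hM x y (2 * r - dist x y) (sub_pos.2 hxy)
  refine joinedIn_pathNbhd_of_pathLength_le hf hx hy ?_
  have hr : 0 ≤ r := by linarith [dist_nonneg (x := f 0) (y := f 1)]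
  rw [← ENNReal.ofReal_add hr hr]
  exact hlen.trans_eq (congrArg ENNReal.ofReal (by ring))

lemma isPathConnSet_pathNbhd {Y : Set M} {r : ℝ}
    (hY : ∀ x ∈ Y, ∀ y ∈ Y, JoinedIn (pathNbhd Y r) x y) : IsPathConnSet (pathNbhd Y r) := by
  intro a ha b hb
  obtain ⟨x, hx, hax⟩ := joinedIn_pathNbhd_of_mem ha
  obtain ⟨y, hy, hby⟩ := joinedIn_pathNbhd_of_mem hb
  exact hax.trans ((hY x hx y hy).trans hby.symm)

lemma SimpleGraph.Reachable.joinedIn {V X : Type*} [TopologicalSpace X] {G : SimpleGraph V}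
    {u v : V} (huv : G.Reachable u v) {S : Set X} {f : V → X} (hS : ∀ w, f w ∈ S)
    (hadj : ∀ a b, G.Adj a b → JoinedIn S (f a) (f b)) : JoinedIn S (f u) (f v) := by
  obtain ⟨p⟩ := huv
  induction p with
  | nil => exact JoinedIn.refl (hS _)
  | cons h _ ih => exact (hadj _ _ h).trans ih

lemma IsGraphSpaceQuasiIsometry.dist_le_of_adj {V : Type*} {q : ℕ}
    {G : SimpleGraph V} {φ : V → M} (hφ : IsGraphSpaceQuasiIsometry q G φ) {u v : V}
    (huv : G.Adj u v) : dist (φ u) (φ v) ≤ 2 * q := by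
  have h := (hφ.1 u v).2
  rw [SimpleGraph.dist_eq_one_iff_adj.2 huv, Nat.cast_one, mul_one] at h
  linarith

theorem pathConn_nbhd_image_of_connected_general {V : Type*} (q : ℕ)
    (G : SimpleGraph V) {M : Type*} [MetricSpace M] (hM : IsLengthSpace M)
    (φ : V → M) (hφ : IsGraphSpaceQuasiIsometry q G φ)
    (X : Set V) (hX : (G.induce X).Connected) :
    IsPathConnSet (pathNbhd (φ '' X) ((q : ℝ) + 1)) := by
  have hadj : ∀ u v : X, (G.induce X).Adj u v →
      JoinedIn (pathNbhd (φ '' X) ((q : ℝ) + 1)) (φ u) (φ v) := fun u v huv ↦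
    hM.joinedIn_pathNbhd (mem_image_of_mem φ u.2) (mem_image_of_mem φ v.2)
      (by linarith [hφ.dist_le_of_adj (SimpleGraph.induce_adj.1 huv)])
  refine isPathConnSet_pathNbhd ?_
  rintro _ ⟨u, hu, rfl⟩ _ ⟨v, hv, rfl⟩
  exact (hX.preconnected ⟨u, hu⟩ ⟨v, hv⟩).joinedIn
    (fun w ↦ subset_pathNbhd _ _ (mem_image_of_mem φ w.2)) hadj

/-- If `φ` is a `q`-quasi-isometry from a graph `G` to a length space `M`, then for every
vertex set `X` inducing a connected subgraph of `G`, the neighbourhood `N^{q+1}[φ(X)]`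
is path-connected. -/
theorem pathConn_nbhd_image_of_connected {V : Type*} (q : ℕ) (hq : 0 < q)
    (G : SimpleGraph V) {M : Type*} [MetricSpace M] (hM : IsLengthSpace M)
    (φ : V → M) (hφ : IsGraphSpaceQuasiIsometry q G φ)
    (X : Set V) (hX : (G.induce X).Connected) :
    IsPathConnSet (pathNbhd (φ '' X) ((q : ℝ) + 1)) :=
  pathConn_nbhd_image_of_connected_general q G hM φ hφ X hX
end

section
/- Let (M, d) be a length space and let ε > 0. (1) If X ⊆ M is path-connected, then N^ε[X] is path-connected. (2) If, moreover, Y ⊆ M is path-connected and there exists a path with one endpoint in X and the other in Y of arc length strictly less than ε (equivalently, dist(X, Y) < ε), then N^ε[X] ∪ Y is path-connected. -/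
open Set ENNReal

variable {M : Type*} [MetricSpace M]

lemma joinedIn_of_path {S : Set M} {f : ℝ → M} (hf : ContinuousOn f (Set.Icc 0 1))
    (hS : ∀ t ∈ Set.Icc (0:ℝ) 1, f t ∈ S) : JoinedIn S (f 0) (f 1) := by
  refine ⟨⟨⟨fun t => f t, ?_⟩, ?_, ?_⟩, ?_⟩
  · exact hf.restrict
  · simp
  · simp
  · intro t; exact hS t t.2

lemma mem_pathNbhd_of_on_path {X : Set M} {ε : ℝ} {f : ℝ → M}
    (hf : ContinuousOn f (Set.Icc 0 1)) (h1 : f 1 ∈ X)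
    (hlen : pathLength f ≤ ENNReal.ofReal ε) {t : ℝ} (ht : t ∈ Set.Icc (0:ℝ) 1) :
    f t ∈ pathNbhd X ε := by
  obtain ⟨ht0, ht1⟩ := ht
  set φ : ℝ → ℝ := fun s => t + s * (1 - t) with hφdef
  have hmaps : ∀ s ∈ Set.Icc (0:ℝ) 1, φ s ∈ Set.Icc (0:ℝ) 1 := by
    rintro s ⟨hs0, hs1⟩; simp only [hφdef]; constructor <;> nlinarith
  refine ⟨f ∘ φ, ?_, ?_, ?_, ?_⟩
  · exact hf.comp (by fun_prop) hmaps
  · simp [hφdef]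
  · simpa [hφdef] using h1
  · have hmono : MonotoneOn φ (Set.Icc (0:ℝ) 1) := by
      intro a _ b _ hab
      simp only [hφdef]
      nlinarith
    calc eVariationOn (f ∘ φ) (Set.Icc 0 1)
        = eVariationOn f (φ '' Set.Icc 0 1) :=
          eVariationOn.comp_eq_of_monotoneOn f φ hmono
      _ ≤ eVariationOn f (Set.Icc 0 1) := eVariationOn.mono f (by
          rintro x ⟨s, hs, rfl⟩; exact hmaps s hs)
      _ ≤ ENNReal.ofReal ε := hlen

lemma mem_pathNbhd_of_on_path' {X : Set M} {ε : ℝ} {f : ℝ → M}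
    (hf : ContinuousOn f (Set.Icc 0 1)) (h0 : f 0 ∈ X)
    (hlen : pathLength f ≤ ENNReal.ofReal ε) {t : ℝ} (ht : t ∈ Set.Icc (0:ℝ) 1) :
    f t ∈ pathNbhd X ε := by
  obtain ⟨ht0, ht1⟩ := ht
  set φ : ℝ → ℝ := fun s => t * (1 - s) with hφdef
  have hmaps : ∀ s ∈ Set.Icc (0:ℝ) 1, φ s ∈ Set.Icc (0:ℝ) 1 := by
    rintro s ⟨hs0, hs1⟩; simp only [hφdef]; constructor <;> nlinarith
  refine ⟨f ∘ φ, ?_, ?_, ?_, ?_⟩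
  · exact hf.comp (by fun_prop) hmaps
  · simp [hφdef]
  · simpa [hφdef] using h0
  · have hanti : AntitoneOn φ (Set.Icc (0:ℝ) 1) := by
      intro a _ b _ hab
      simp only [hφdef]
      nlinarith
    calc eVariationOn (f ∘ φ) (Set.Icc 0 1)
        = eVariationOn f (φ '' Set.Icc 0 1) :=
          eVariationOn.comp_eq_of_antitoneOn f φ hanti
      _ ≤ eVariationOn f (Set.Icc 0 1) := eVariationOn.mono f (by
          rintro x ⟨s, hs, rfl⟩; exact hmaps s hs)
      _ ≤ ENNReal.ofReal ε := hlen

lemma subset_pathNbhd_s9 {X : Set M} {ε : ℝ} (hε : 0 ≤ ε) : X ⊆ pathNbhd X ε := by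
  intro x hx
  refine ⟨fun _ => x, continuousOn_const, rfl, hx, ?_⟩
  have : pathLength (fun _ : ℝ => x) = 0 :=
    eVariationOn.constant_on (by simp [Set.Subsingleton])
  simp [this]

/-- In a length space: (1) the `ε`-path-neighbourhood of a path-connected set is
path-connected; (2) if moreover `Y` is path-connected and some path from `X` to `Y` has arc
length strictly less than `ε`, then `N^ε[X] ∪ Y` is path-connected. -/
theorem pathConn_nbhd_and_union {M : Type*} [MetricSpace M] (hM : IsLengthSpace M)
    (ε : ℝ) (hε : 0 < ε) (X : Set M) (hX : IsPathConnSet X) :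
    IsPathConnSet (pathNbhd X ε) ∧
    ∀ Y : Set M, IsPathConnSet Y →
      (∃ f : ℝ → M, IsPathFromTo f X Y ∧ pathLength f < ENNReal.ofReal ε) →
      IsPathConnSet (pathNbhd X ε ∪ Y) := by
  have hXsub : X ⊆ pathNbhd X ε := subset_pathNbhd_s9 hε.le
  -- every point of the neighbourhood is joined inside it to a point of X
  have key : ∀ a ∈ pathNbhd X ε, ∃ x ∈ X, JoinedIn (pathNbhd X ε) a x := by
    rintro a ⟨f, hf, hf0, hf1, hlen⟩
    refine ⟨f 1, hf1, ?_⟩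
    rw [← hf0]
    exact joinedIn_of_path hf (fun t ht => mem_pathNbhd_of_on_path hf hf1 hlen ht)
  have part1 : IsPathConnSet (pathNbhd X ε) := by
    intro a ha b hb
    obtain ⟨x, hx, hax⟩ := key a ha
    obtain ⟨y, hy, hby⟩ := key b hb
    exact (hax.trans ((hX x hx y hy).mono hXsub)).trans hby.symm
  refine ⟨part1, ?_⟩
  rintro Y hY ⟨g, ⟨hg, hg0, hg1⟩, hglen⟩
  set S := pathNbhd X ε ∪ Y with hS
  have hNS : pathNbhd X ε ⊆ S := Set.subset_union_left
  have hYS : Y ⊆ S := Set.subset_union_right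
  -- every point on g lies in the neighbourhood
  have hgmem : ∀ t ∈ Set.Icc (0:ℝ) 1, g t ∈ pathNbhd X ε :=
    fun t ht => mem_pathNbhd_of_on_path' hg hg0 hglen.le ht
  have hjoin : JoinedIn S (g 0) (g 1) :=
    (joinedIn_of_path hg hgmem).mono hNS
  -- everyone joins to g 1
  have hall : ∀ p ∈ S, JoinedIn S p (g 1) := by
    rintro p (hp | hp)
    · exact ((part1 p hp (g 0) (hgmem 0 (by norm_num))).mono hNS).trans hjoin
    · exact (hY p hp (g 1) hg1).mono hYS
  intro p hp q hq
  exact (hall p hp).trans (hall q hq).symm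
end

section
/- Let G be a finite graph and let M be a matching in G (a set of pairwise vertex-disjoint edges). Let G' be the graph obtained from G by contracting every edge of M. Then tw(G) ≤ 2·tw(G') + 1, where tw denotes treewidth. -/
open SimpleGraph

/-- `B` (indexed by the tree `Tr`) is a tree-decomposition of `G`: for each vertex `v` of `G`
the bags containing `v` induce a non-empty subtree, and each edge of `G` lies in some bag. -/
def SimpleGraph.IsTreeDecomp {V T : Type} (G : SimpleGraph V) (Tr : SimpleGraph T)
    (B : T → Set V) : Prop :=
  Tr.IsTree ∧
  (∀ v : V, (Tr.induce {x : T | v ∈ B x}).Connected) ∧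
  (∀ u v : V, G.Adj u v → ∃ x : T, u ∈ B x ∧ v ∈ B x)

/-- The treewidth of `G`: the least `k` such that `G` has a tree-decomposition all of whose
bags have at most `k + 1` vertices. -/
noncomputable def SimpleGraph.treewidth {V : Type} (G : SimpleGraph V) : ℕ∞ :=
  sInf {k : ℕ∞ | ∃ (T : Type) (Tr : SimpleGraph T) (B : T → Set V),
    G.IsTreeDecomp Tr B ∧ ∀ x : T, (B x).encard ≤ k + 1}

/-- **Contracting a matching at most halves the treewidth.** If `G'` is obtained from a finite
graph `G` by contracting every edge of a matching (formalised via a map `f` whose fibres are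
single vertices or matched edges of `G`), then `tw(G) ≤ 2·tw(G') + 1`. -/
theorem treewidth_le_of_contract_matching {V V' : Type} [Fintype V]
    (G : SimpleGraph V) (G' : SimpleGraph V') (f : V → V')
    (hfiber : ∀ a : V', (∃ u : V, f ⁻¹' {a} = {u}) ∨
      ∃ u v : V, G.Adj u v ∧ f ⁻¹' {a} = {u, v})
    (hadj : ∀ a b : V', G'.Adj a b ↔ a ≠ b ∧ ∃ u v : V, f u = a ∧ f v = b ∧ G.Adj u v) :
    G.treewidth ≤ 2 * G'.treewidth + 1 := by
  classical
  -- the defining set for G'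
  set S' : Set ℕ∞ := {k : ℕ∞ | ∃ (T : Type) (Tr : SimpleGraph T) (B : T → Set V'),
    G'.IsTreeDecomp Tr B ∧ ∀ x : T, (B x).encard ≤ k + 1} with hS'
  by_cases hne : S'.Nonempty
  · have hmem : G'.treewidth ∈ S' := csInf_mem hne
    obtain ⟨T, Tr, B, hdec, hbd⟩ := hmem
    set k : ℕ∞ := G'.treewidth with hk
    -- a representative of each fiber
    have hrepex : ∀ a : V', ∃ u, f u = a := by
      intro a
      rcases hfiber a with ⟨u, hu⟩ | ⟨u, v, _, hu⟩
      · exact ⟨u, by have : u ∈ f ⁻¹' {a} := hu ▸ rfl; simpa using this⟩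
      · refine ⟨u, ?_⟩
        have : u ∈ f ⁻¹' {a} := by rw [hu]; exact Or.inl rfl
        simpa using this
    set rep : V' → V := fun a => (hrepex a).choose with hrepdef
    have hrep : ∀ a, f (rep a) = a := fun a => (hrepex a).choose_spec
    -- each fiber has at most two elements
    have hfib2 : ∀ (a : V') (u v w : V), f u = a → f v = a → f w = a →
        u = v ∨ u = w ∨ v = w := by
      intro a u v w hu hv hw
      rcases hfiber a with ⟨z, hz⟩ | ⟨z₁, z₂, _, hz⟩
      · have hu' : u ∈ f ⁻¹' {a} := by simpa using hu
        have hv' : v ∈ f ⁻¹' {a} := by simpa using hv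
        rw [hz] at hu' hv'
        left; simp at hu' hv'; rw [hu', hv']
      · have hu' : u ∈ f ⁻¹' {a} := by simpa using hu
        have hv' : v ∈ f ⁻¹' {a} := by simpa using hv
        have hw' : w ∈ f ⁻¹' {a} := by simpa using hw
        rw [hz] at hu' hv' hw'
        simp only [Set.mem_insert_iff, Set.mem_singleton_iff] at hu' hv' hw'
        rcases hu' with h1 | h1 <;> rcases hv' with h2 | h2 <;> rcases hw' with h3 | h3 <;>
          simp [h1, h2, h3]
    apply sInf_le
    refine ⟨T, Tr, fun x => f ⁻¹' (B x), ⟨hdec.1, ?_, ?_⟩, ?_⟩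
    · intro u
      exact hdec.2.1 (f u)
    · intro u v huv
      by_cases hfu : f u = f v
      · obtain ⟨x, hx⟩ := (hdec.2.1 (f u)).nonempty
        exact ⟨x, hx, by simpa [Set.mem_preimage, hfu] using hx⟩
      · have : G'.Adj (f u) (f v) := (hadj _ _).2 ⟨hfu, u, v, rfl, rfl, huv⟩
        obtain ⟨x, hx1, hx2⟩ := hdec.2.2 _ _ this
        exact ⟨x, hx1, hx2⟩
    · intro x
      set s : Set V := f ⁻¹' (B x) with hs
      set P : Set V := {u : V | u = rep (f u)} with hP
      have hsplit : s = (s ∩ P) ∪ (s \ P) := (Set.inter_union_diff s P).symm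
      have hinj1 : Set.InjOn f (s ∩ P) := by
        intro u hu v hv hfuv
        have : u = rep (f u) := hu.2
        have h2 : v = rep (f v) := hv.2
        rw [this, h2, hfuv]
      have hinj2 : Set.InjOn f (s \ P) := by
        intro u hu v hv hfuv
        have h1 : u ≠ rep (f u) := hu.2
        have h2 : v ≠ rep (f v) := hv.2
        rcases hfib2 (f u) (rep (f u)) u v (hrep _) rfl hfuv.symm with h | h | h
        · exact absurd h.symm h1
        · exact absurd (hfuv ▸ h.symm) h2
        · exact h
      have him1 : (s ∩ P).encard ≤ (B x).encard := by
        rw [← hinj1.encard_image]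
        exact Set.encard_mono (by rintro y ⟨u, ⟨hu, _⟩, rfl⟩; exact hu)
      have him2 : (s \ P).encard ≤ (B x).encard := by
        rw [← hinj2.encard_image]
        exact Set.encard_mono (by rintro y ⟨u, ⟨hu, _⟩, rfl⟩; exact hu)
      have hle : s.encard ≤ (s ∩ P).encard + (s \ P).encard := by
        have h := Set.encard_union_le (s ∩ P) (s \ P)
        rwa [Set.inter_union_diff] at h
      calc s.encard ≤ (s ∩ P).encard + (s \ P).encard := hle
        _ ≤ (B x).encard + (B x).encard := add_le_add him1 him2
        _ ≤ (k + 1) + (k + 1) := add_le_add (hbd x) (hbd x)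
        _ = 2 * k + 1 + 1 := by ring
  · have hempty : S' = ∅ := Set.not_nonempty_iff_eq_empty.mp hne
    have : G'.treewidth = ⊤ := by
      rw [SimpleGraph.treewidth, ← hS', hempty, sInf_empty]
    rw [this]
    simp [ENat.mul_top]
end

section
/- For every positive integer Δ there exists a positive integer q such that every connected graph with maximum degree at most Δ is q-quasi-isometric to some graph with maximum degree at most 3. -/
open SimpleGraph
/-! Replace every vertex `v` of `G` by a path on `Δ` ports and attach each edge `uv` of `G` to a
port of `u` and a port of `v`, using distinct ports for distinct edges at a vertex. A port then
has at most two neighbours on its path and one across an edge. Projecting to `G` does not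
lengthen walks, an edge of `G` lifts to a walk of length at most `2Δ` through the two paths, and
every port is within `Δ` of port `0`; so `v ↦ (v, 0)` is a `2Δ`-quasi-isometry. -/

theorem Set.exists_injOn_fin_of_encard_le {α : Type*} {s : Set α} {n : ℕ} (hn : 0 < n)
    (hs : s.encard ≤ n) : ∃ f : α → Fin n, Set.InjOn f s := by
  have : Nonempty (Fin n) := Fin.pos_iff_nonempty.mp hn
  obtain ⟨f, -, hf⟩ := (Set.finite_of_encard_le_coe hs).exists_injOn_of_encard_le
    (t := (Set.univ : Set (Fin n))) (by simpa using hs)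
  exact ⟨f, hf⟩

namespace SimpleGraph

variable {V V' : Type*}

theorem isQuasiIsometry_of_dist_le {G : SimpleGraph V} {G' : SimpleGraph V'} {φ : V → V'}
    {q : ℕ} (hq : 1 ≤ q) (hlow : ∀ x y, G.dist x y ≤ G'.dist (φ x) (φ y))
    (hup : ∀ x y, G'.dist (φ x) (φ y) ≤ q * G.dist x y)
    (hcover : ∀ v', ∃ v, G'.dist v' (φ v) ≤ q) : G.IsQuasiIsometry q G' φ := by
  have hq' : (1 : ℝ) ≤ q := by exact_mod_cast hq
  refine ⟨fun x y => ⟨?_, ?_⟩, fun v' => ?_⟩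
  · have hlow' : (G.dist x y : ℝ) ≤ G'.dist (φ x) (φ y) := by exact_mod_cast hlow x y
    have hshrink : (q : ℝ)⁻¹ * G.dist x y ≤ G.dist x y :=
      mul_le_of_le_one_left (Nat.cast_nonneg _) (inv_le_one_of_one_le₀ hq')
    linarith
  · have hup' : (G'.dist (φ x) (φ y) : ℝ) ≤ q * G.dist x y := by exact_mod_cast hup x y
    linarith
  · obtain ⟨v, hv⟩ := hcover v'
    exact ⟨v, by exact_mod_cast hv⟩

variable {n : ℕ}

/-- Each vertex `v` of `G` becomes a path on the ports `(v, 0), …, (v, n - 1)`, and an edge `uv`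
of `G` becomes an edge between the ports `(u, F u v)` and `(v, F v u)`. -/
def pathBlowup (G : SimpleGraph V) (F : V → V → Fin n) : SimpleGraph (V × Fin n) where
  Adj a b := (a.1 = b.1 ∧ (pathGraph n).Adj a.2 b.2) ∨
    (G.Adj a.1 b.1 ∧ F a.1 b.1 = a.2 ∧ F b.1 a.1 = b.2)
  symm := ⟨fun a b => by
    rintro (⟨h, hp⟩ | ⟨h, ha, hb⟩)
    exacts [Or.inl ⟨h.symm, hp.symm⟩, Or.inr ⟨h.symm, hb, ha⟩]⟩
  loopless := ⟨fun a => by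
    rintro (⟨-, hp⟩ | ⟨h, -⟩)
    exacts [hp.ne rfl, h.ne rfl]⟩

variable {G : SimpleGraph V} {F : V → V → Fin n}

theorem pathBlowup_adj {a b : V × Fin n} : (G.pathBlowup F).Adj a b ↔
    (a.1 = b.1 ∧ (pathGraph n).Adj a.2 b.2) ∨ (G.Adj a.1 b.1 ∧ F a.1 b.1 = a.2 ∧ F b.1 a.1 = b.2) :=
  Iff.rfl

theorem pathBlowup_exists_walk_fiber (v : V) (i j : Fin n) :
    ∃ w : (G.pathBlowup F).Walk (v, i) (v, j), w.length < n := by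
  let fiber : pathGraph n →g G.pathBlowup F :=
    ⟨fun k => (v, k), fun h => pathBlowup_adj.mpr (Or.inl ⟨rfl, h⟩)⟩
  obtain ⟨p, hp, -⟩ := (pathGraph_preconnected n i j).exists_path_of_dist
  refine ⟨p.map fiber, ?_⟩
  simpa [Walk.length_map] using hp.length_lt

theorem pathBlowup_exists_walk_of_adj {u v : V} (h : G.Adj u v) (i : Fin n) :
    ∃ w : (G.pathBlowup F).Walk (u, i) (v, i), w.length ≤ 2 * n := by
  obtain ⟨w₁, h₁⟩ := pathBlowup_exists_walk_fiber (G := G) (F := F) u i (F u v)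
  obtain ⟨w₂, h₂⟩ := pathBlowup_exists_walk_fiber (G := G) (F := F) v (F v u) i
  have hcross : (G.pathBlowup F).Adj (u, F u v) (v, F v u) :=
    pathBlowup_adj.mpr (Or.inr ⟨h, rfl, rfl⟩)
  exact ⟨w₁.append (.cons hcross w₂), by simp only [Walk.length_append, Walk.length_cons]; omega⟩

theorem pathBlowup_exists_walk_lift {u v : V} (p : G.Walk u v) (i : Fin n) :
    ∃ w : (G.pathBlowup F).Walk (u, i) (v, i), w.length ≤ 2 * n * p.length := by
  induction p with
  | nil => exact ⟨.nil, by simp⟩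
  | cons h p ih =>
    obtain ⟨w₁, h₁⟩ := pathBlowup_exists_walk_of_adj (F := F) h i
    obtain ⟨w₂, h₂⟩ := ih
    refine ⟨w₁.append w₂, ?_⟩
    simp only [Walk.length_append, Walk.length_cons, Nat.mul_succ]
    omega

theorem pathBlowup_reachable {u v : V} (h : G.Reachable u v) (i j : Fin n) :
    (G.pathBlowup F).Reachable (u, i) (v, j) := by
  obtain ⟨p⟩ := h
  obtain ⟨w₁, -⟩ := pathBlowup_exists_walk_lift (F := F) p i
  obtain ⟨w₂, -⟩ := pathBlowup_exists_walk_fiber (G := G) (F := F) v i j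
  exact ⟨w₁.append w₂⟩

theorem dist_pathBlowup_le {u v : V} (h : G.Reachable u v) (i : Fin n) :
    (G.pathBlowup F).dist (u, i) (v, i) ≤ 2 * n * G.dist u v := by
  obtain ⟨p, hp⟩ := h.exists_walk_length_eq_dist
  obtain ⟨w, hw⟩ := pathBlowup_exists_walk_lift (F := F) p i
  exact hp ▸ (dist_le w).trans hw

theorem pathBlowup_exists_walk_fst {a b : V × Fin n} (w : (G.pathBlowup F).Walk a b) :
    ∃ p : G.Walk a.1 b.1, p.length ≤ w.length := by
  induction w with
  | nil => exact ⟨.nil, le_rfl⟩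
  | cons h w ih =>
    obtain ⟨p, hp⟩ := ih
    rcases pathBlowup_adj.mp h with ⟨hfst, -⟩ | ⟨hadj, -⟩
    · exact ⟨p.copy hfst.symm rfl, by simp only [Walk.length_copy, Walk.length_cons]; omega⟩
    · exact ⟨.cons hadj p, by simp only [Walk.length_cons]; omega⟩

theorem dist_le_dist_pathBlowup {u v : V} (h : G.Reachable u v) (i j : Fin n) :
    G.dist u v ≤ (G.pathBlowup F).dist (u, i) (v, j) := by
  obtain ⟨w, hw⟩ := (pathBlowup_reachable (F := F) h i j).exists_walk_length_eq_dist
  obtain ⟨p, hp⟩ := pathBlowup_exists_walk_fst w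
  exact hw ▸ (dist_le p).trans hp

theorem pathBlowup_neighborSet_encard_le_three (hF : ∀ v, Set.InjOn (F v) (G.neighborSet v))
    (a : V × Fin n) : ((G.pathBlowup F).neighborSet a).encard ≤ 3 := by
  have hsub : (G.pathBlowup F).neighborSet a ⊆
      {b | b.1 = a.1 ∧ b.2.val = a.2.val + 1} ∪ {b | b.1 = a.1 ∧ b.2.val + 1 = a.2.val} ∪
        {b | G.Adj a.1 b.1 ∧ F a.1 b.1 = a.2 ∧ F b.1 a.1 = b.2} := by
    rintro b (⟨hfst, hp⟩ | hcross)
    · rcases pathGraph_adj.mp hp with h | h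
      exacts [Or.inl (Or.inl ⟨hfst.symm, h.symm⟩), Or.inl (Or.inr ⟨hfst.symm, h⟩)]
    · exact Or.inr hcross
  have hup : {b : V × Fin n | b.1 = a.1 ∧ b.2.val = a.2.val + 1}.encard ≤ 1 :=
    Set.encard_le_one_iff.mpr fun b c ⟨hb₁, hb₂⟩ ⟨hc₁, hc₂⟩ =>
      Prod.ext (hb₁.trans hc₁.symm) (Fin.ext (hb₂.trans hc₂.symm))
  have hdown : {b : V × Fin n | b.1 = a.1 ∧ b.2.val + 1 = a.2.val}.encard ≤ 1 :=
    Set.encard_le_one_iff.mpr fun b c ⟨hb₁, hb₂⟩ ⟨hc₁, hc₂⟩ =>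
      Prod.ext (hb₁.trans hc₁.symm) (Fin.ext (by omega))
  have hcross : {b : V × Fin n | G.Adj a.1 b.1 ∧ F a.1 b.1 = a.2 ∧ F b.1 a.1 = b.2}.encard ≤ 1 :=
    Set.encard_le_one_iff.mpr fun b c ⟨hb, hFb, hb₂⟩ ⟨hc, hFc, hc₂⟩ => by
      have hfst : b.1 = c.1 := hF a.1 hb hc (hFb.trans hFc.symm)
      exact Prod.ext hfst (by rw [← hb₂, ← hc₂, hfst])
  calc ((G.pathBlowup F).neighborSet a).encard
      ≤ _ := Set.encard_le_encard hsub
    _ ≤ 1 + 1 + 1 := (Set.encard_union_le _ _).trans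
        (add_le_add ((Set.encard_union_le _ _).trans (add_le_add hup hdown)) hcross)
    _ = 3 := rfl

end SimpleGraph

/-- **Reducing to maximum degree 3.** For every `Δ` there is a `q` such that every connected
graph of maximum degree at most `Δ` is `q`-quasi-isometric to a graph of maximum degree at
most `3`. -/
theorem quasi_isometric_to_max_degree_three (Δ : ℕ) (hΔ : 0 < Δ) :
    ∃ q : ℕ, 0 < q ∧
      ∀ (V : Type u) (G : SimpleGraph V), G.Connected →
        (∀ v : V, (G.neighborSet v).encard ≤ Δ) →
        ∃ (V' : Type u) (G' : SimpleGraph V') (φ : V → V'),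
          (∀ v' : V', (G'.neighborSet v').encard ≤ 3) ∧
          SimpleGraph.IsQuasiIsometry q G G' φ := by
  refine ⟨2 * Δ, by omega, fun V G hG hdeg => ?_⟩
  choose F hF using fun v => Set.exists_injOn_fin_of_encard_le hΔ (hdeg v)
  let base : Fin Δ := ⟨0, hΔ⟩
  refine ⟨V × Fin Δ, G.pathBlowup F, fun v => (v, base),
    pathBlowup_neighborSet_encard_le_three hF, isQuasiIsometry_of_dist_le (by omega)
      (fun x y => dist_le_dist_pathBlowup (hG.preconnected x y) base base)
      (fun x y => dist_pathBlowup_le (hG.preconnected x y) base) fun ⟨v, i⟩ => ⟨v, ?_⟩⟩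
  obtain ⟨w, hw⟩ := pathBlowup_exists_walk_fiber (G := G) (F := F) v i base
  exact (dist_le w).trans (by omega)
end
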